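/- Let T be the perfect binary tree with n = 2^D − 1 nodes (D ≥ 1) with nonnegative node weights, let δ ∈ (0,1], ε ∈ (0,1), and let k be a positive integer with k ≤ n^{1−δ}. Fix a level 1 ≤ η ≤ D and let T_1, …, T_M denote the pairwise disjoint largest subtrees rooted at the nodes of level η, with subtree weights u_1, …, u_M. Let m = ⌈(1+ε)·n^{1−δ}/ε⌉ and assume m ≤ M. Let u be the m-th largest value among u_1, …, u_M, and call T_j deleted if u_j < u. Then the minimum of ∑_{v∉Ω} x_v over all Ω ∈ 𝕋_k that contain no node of any deleted subtree is at most (1+ε) times the minimum of ∑_{v∉Ω} x_v over all Ω ∈ 𝕋_k. -/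

import Mathlib

open scoped Classical

/-- Nodes of the perfect binary tree with `n` nodes are `1, …, n` in heap order: the root is `1`
and the parent of node `v ≥ 2` is `v / 2`.  A rooted subtree is a set of nodes containing the
root and closed under taking parents. -/
def isRootedSubtree (n : ℕ) (Ω : Finset ℕ) : Prop :=
  Ω ⊆ Finset.Icc 1 n ∧ 1 ∈ Ω ∧ ∀ v ∈ Ω, 2 ≤ v → v / 2 ∈ Ω

/-- The subtree weight `u v`: the sum of the weights of all descendants of `v`
(`z` is a descendant of `v` iff `v` is obtained from `z` by iterated parent steps). -/
noncomputable def subtreeWeight (n : ℕ) (x : ℕ → ℝ) (v : ℕ) : ℝ :=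
  ∑ z ∈ (Finset.Icc 1 n).filter (fun z => ∃ j : ℕ, z / 2 ^ j = v), x z

/-- The tail value of `Ω`: the total weight of the nodes outside `Ω`. -/
noncomputable def tailValue (n : ℕ) (x : ℕ → ℝ) (Ω : Finset ℕ) : ℝ :=
  ∑ v ∈ Finset.Icc 1 n \ Ω, x v

/-!
Take an optimal `Ω₀ ∈ 𝕋_k` and cut off every deleted subtree it enters. Being closed under
parents, `Ω₀` misses at least `m - k` of the `m` level-`η` roots of weight `≥ u` together with
their whole subtrees, so its tail is at least `(m - k) u`. The cut removes at most `k` deleted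
subtrees, each of weight `< u`, so the tail grows by at most `k u ≤ ε (m - k) u`, the last
inequality being `(1 + ε) k ≤ ε m`.
-/

open Finset

noncomputable def descendants (n j : ℕ) : Finset ℕ :=
  (Icc 1 n).filter (fun z => ∃ i : ℕ, z / 2 ^ i = j)

noncomputable def prune (Ω S : Finset ℕ) : Finset ℕ :=
  Ω.filter (fun v => ∀ j ∈ S, ∀ i : ℕ, v / 2 ^ i ≠ j)

lemma mem_descendants {n j z : ℕ} : z ∈ descendants n j ↔ z ∈ Icc 1 n ∧ ∃ i, z / 2 ^ i = j :=
  mem_filter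

lemma subtreeWeight_nonneg (n : ℕ) {x : ℕ → ℝ} (hx : ∀ v, 0 ≤ x v) (j : ℕ) :
    0 ≤ subtreeWeight n x j :=
  sum_nonneg fun z _ => hx z

-- In heap order the nodes in `Ico (2 ^ a) (2 ^ (a + 1))` form one level of the tree.
lemma eq_zero_of_div_two_pow_mem_Ico {a j d : ℕ} (hj : j < 2 ^ (a + 1))
    (hjd : 2 ^ a ≤ j / 2 ^ d) : d = 0 := by
  by_contra hd
  have : j / 2 ^ d ≤ j / 2 :=
    Nat.div_le_div_left (Nat.le_self_pow hd 2) two_pos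
  have : j / 2 < 2 ^ a := by rw [Nat.div_lt_iff_lt_mul two_pos, ← pow_succ]; exact hj
  omega

lemma eq_of_div_two_pow_eq_of_mem_Ico {a j j' z i i' : ℕ}
    (hj : j ∈ Ico (2 ^ a) (2 ^ (a + 1))) (hj' : j' ∈ Ico (2 ^ a) (2 ^ (a + 1)))
    (hi : z / 2 ^ i = j) (hi' : z / 2 ^ i' = j') : j = j' := by
  wlog hle : i ≤ i' generalizing j j' i i'
  · exact (this hj' hj hi' hi (by omega)).symm
  rw [mem_Ico] at hj hj'
  have hj'j : j' = j / 2 ^ (i' - i) := by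
    rw [← hi, ← hi', Nat.div_div_eq_div_mul, ← pow_add, Nat.add_sub_cancel' hle]
  have := eq_zero_of_div_two_pow_mem_Ico hj.2 (hj'j ▸ hj'.1)
  rw [hj'j, this, pow_zero, Nat.div_one]

lemma pairwiseDisjoint_descendants (n a : ℕ) :
    (Ico (2 ^ a) (2 ^ (a + 1)) : Set ℕ).PairwiseDisjoint (descendants n) := by
  intro j hj j' hj' hne
  refine disjoint_left.2 fun z hz hz' => hne ?_
  obtain ⟨-, i, hi⟩ := mem_descendants.1 hz
  obtain ⟨-, i', hi'⟩ := mem_descendants.1 hz'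
  exact eq_of_div_two_pow_eq_of_mem_Ico (mem_coe.1 hj) (mem_coe.1 hj') hi hi'

lemma sum_subtreeWeight_eq_sum_biUnion {a n : ℕ} (x : ℕ → ℝ) {G : Finset ℕ}
    (hG : G ⊆ Ico (2 ^ a) (2 ^ (a + 1))) :
    ∑ j ∈ G, subtreeWeight n x j = ∑ z ∈ G.biUnion (descendants n), x z :=
  (sum_biUnion ((pairwiseDisjoint_descendants n a).subset (coe_subset.2 hG))).symm

lemma one_le_of_mem_Ico_two_pow {a j : ℕ} (hj : j ∈ Ico (2 ^ a) (2 ^ (a + 1))) : 1 ≤ j :=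
  Nat.one_le_two_pow.trans (mem_Ico.1 hj).1

lemma eq_one_of_mem_Ico_two_pow {a j : ℕ} (h1 : 1 ∈ Ico (2 ^ a) (2 ^ (a + 1)))
    (hj : j ∈ Ico (2 ^ a) (2 ^ (a + 1))) : j = 1 := by
  rw [mem_Ico, pow_succ] at h1 hj
  have := Nat.one_le_two_pow (n := a)
  omega

lemma two_le_of_mem_Ico_of_lt {α : Type*} [Preorder α] {f : ℕ → α} {a j j₀ : ℕ}
    (hj : j ∈ Ico (2 ^ a) (2 ^ (a + 1))) (hj₀ : j₀ ∈ Ico (2 ^ a) (2 ^ (a + 1)))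
    (hlt : f j < f j₀) : 2 ≤ j := by
  by_contra hj2
  obtain rfl : j = 1 := by have := one_le_of_mem_Ico_two_pow hj; omega
  rw [eq_one_of_mem_Ico_two_pow hj hj₀] at hlt
  exact lt_irrefl _ hlt

section RootedSubtrees

variable {n : ℕ} {Ω : Finset ℕ}

lemma isRootedSubtree_singleton_one (hn : 1 ≤ n) : isRootedSubtree n {1} :=
  ⟨singleton_subset_iff.2 (mem_Icc.2 ⟨le_rfl, hn⟩), mem_singleton_self 1,
    fun v hv h2 => by rw [mem_singleton] at hv; omega⟩

lemma isRootedSubtree.div_two_pow_mem (hΩ : isRootedSubtree n Ω) {z : ℕ} (hz : z ∈ Ω)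
    (i : ℕ) (hi : 1 ≤ z / 2 ^ i) : z / 2 ^ i ∈ Ω := by
  induction i with
  | zero => simpa using hz
  | succ i ih =>
    rw [pow_succ, ← Nat.div_div_eq_div_mul] at hi ⊢
    exact hΩ.2.2 _ (ih (hi.trans (Nat.div_le_self _ _))) ((Nat.one_le_div_iff two_pos).1 hi)

lemma isRootedSubtree.descendants_subset_sdiff (hΩ : isRootedSubtree n Ω) {j : ℕ}
    (hj : 1 ≤ j) (hjΩ : j ∉ Ω) : descendants n j ⊆ Icc 1 n \ Ω := by
  intro z hz
  obtain ⟨hzn, i, rfl⟩ := mem_descendants.1 hz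
  exact mem_sdiff.2 ⟨hzn, fun hzΩ => hjΩ (hΩ.div_two_pow_mem hzΩ i hj)⟩

lemma isRootedSubtree_prune (hΩ : isRootedSubtree n Ω) {S : Finset ℕ} (hS : ∀ j ∈ S, 2 ≤ j) :
    isRootedSubtree n (prune Ω S) := by
  refine ⟨(filter_subset _ _).trans hΩ.1, mem_filter.2 ⟨hΩ.2.1, fun j hj i hij => ?_⟩, ?_⟩
  · have := Nat.div_le_self 1 (2 ^ i)
    have := hS j hj
    omega
  · intro v hv h2
    obtain ⟨hvΩ, hvS⟩ := mem_filter.1 hv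
    refine mem_filter.2 ⟨hΩ.2.2 v hvΩ h2, fun j hj i hij => hvS j hj (i + 1) ?_⟩
    rwa [pow_succ', ← Nat.div_div_eq_div_mul]

lemma isRootedSubtree.sdiff_prune_subset (hΩ : isRootedSubtree n Ω) {S : Finset ℕ}
    (hS : ∀ j ∈ S, 1 ≤ j) : Ω \ prune Ω S ⊆ (S ∩ Ω).biUnion (descendants n) := by
  intro v hv
  obtain ⟨hvΩ, hvS⟩ := mem_sdiff.1 hv
  simp only [prune, mem_filter, hvΩ, true_and, not_forall, not_not] at hvS
  obtain ⟨j, hjS, i, rfl⟩ := hvS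
  exact mem_biUnion.2 ⟨_, mem_inter.2 ⟨hjS, hΩ.div_two_pow_mem hvΩ i (hS _ hjS)⟩,
    mem_descendants.2 ⟨hΩ.1 hvΩ, i, rfl⟩⟩

lemma exists_isRootedSubtree_tailValue_le (hn : 1 ≤ n) (x : ℕ → ℝ) {k : ℕ} (hk : 1 ≤ k) :
    ∃ Ω₀, isRootedSubtree n Ω₀ ∧ Ω₀.card ≤ k ∧
      ∀ Ω', isRootedSubtree n Ω' → Ω'.card ≤ k → tailValue n x Ω₀ ≤ tailValue n x Ω' := by
  set 𝒯 := (Icc 1 n).powerset.filter (fun Ω => isRootedSubtree n Ω ∧ Ω.card ≤ k)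
  have hmem : ∀ Ω, Ω ∈ 𝒯 ↔ isRootedSubtree n Ω ∧ Ω.card ≤ k := fun Ω => by
    simpa [𝒯] using fun h _ => h.1
  obtain ⟨Ω₀, hΩ₀, hmin⟩ := 𝒯.exists_min_image (tailValue n x)
    ⟨{1}, (hmem _).2 ⟨isRootedSubtree_singleton_one hn, by simpa using hk⟩⟩
  exact ⟨Ω₀, ((hmem _).1 hΩ₀).1, ((hmem _).1 hΩ₀).2,
    fun Ω' h h' => hmin Ω' ((hmem _).2 ⟨h, h'⟩)⟩

end RootedSubtrees

section TailBounds

variable {n a : ℕ} {x : ℕ → ℝ} {Ω : Finset ℕ}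

lemma tailValue_eq_add_sum_sdiff {A B : Finset ℕ} (hAB : A ⊆ B) (hB : B ⊆ Icc 1 n) :
    tailValue n x A = tailValue n x B + ∑ v ∈ B \ A, x v := by
  rw [tailValue, tailValue, sum_sdiff_eq_sub (hAB.trans hB), sum_sdiff_eq_sub hB,
    sum_sdiff_eq_sub hAB]
  ring

lemma sum_subtreeWeight_le_tailValue (hx : ∀ v, 0 ≤ x v) (hΩ : isRootedSubtree n Ω)
    {G : Finset ℕ} (hG : G ⊆ Ico (2 ^ a) (2 ^ (a + 1))) (hGΩ : Disjoint G Ω) :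
    ∑ j ∈ G, subtreeWeight n x j ≤ tailValue n x Ω := by
  rw [sum_subtreeWeight_eq_sum_biUnion x hG]
  refine sum_le_sum_of_subset_of_nonneg (biUnion_subset.2 fun j hj => ?_) fun z _ _ => hx z
  exact hΩ.descendants_subset_sdiff (one_le_of_mem_Ico_two_pow (hG hj))
    (disjoint_left.1 hGΩ hj)

lemma sub_mul_le_tailValue (hx : ∀ v, 0 ≤ x v) (hΩ : isRootedSubtree n Ω) {k m : ℕ}
    (hk : Ω.card ≤ k) {G : Finset ℕ} (hG : G ⊆ Ico (2 ^ a) (2 ^ (a + 1))) (hm : m ≤ G.card)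
    {u : ℝ} (hu : 0 ≤ u) (hGu : ∀ j ∈ G, u ≤ subtreeWeight n x j) :
    ((m : ℝ) - k) * u ≤ tailValue n x Ω := by
  have hcard : (m : ℝ) - k ≤ (G \ Ω).card := by
    have := card_le_card_sdiff_add_card (s := G) (t := Ω)
    rw [sub_le_iff_le_add]; exact_mod_cast (hm.trans this).trans (by omega)
  calc ((m : ℝ) - k) * u ≤ (G \ Ω).card * u := mul_le_mul_of_nonneg_right hcard hu
    _ = ∑ _j ∈ G \ Ω, u := by rw [sum_const, nsmul_eq_mul]
    _ ≤ ∑ j ∈ G \ Ω, subtreeWeight n x j :=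
      sum_le_sum fun j hj => hGu j (mem_sdiff.1 hj).1
    _ ≤ tailValue n x Ω :=
      sum_subtreeWeight_le_tailValue hx hΩ (sdiff_subset.trans hG) sdiff_disjoint

lemma sum_sdiff_prune_le (hx : ∀ v, 0 ≤ x v) (hΩ : isRootedSubtree n Ω) {k : ℕ}
    (hk : Ω.card ≤ k) {S : Finset ℕ} (hS : S ⊆ Ico (2 ^ a) (2 ^ (a + 1)))
    {u : ℝ} (hu : 0 ≤ u) (hSu : ∀ j ∈ S, subtreeWeight n x j ≤ u) :
    ∑ v ∈ Ω \ prune Ω S, x v ≤ k * u := by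
  have hSΩ : S ∩ Ω ⊆ Ico (2 ^ a) (2 ^ (a + 1)) := inter_subset_left.trans hS
  have hcard : ((S ∩ Ω).card : ℝ) ≤ k := by
    exact_mod_cast (card_le_card inter_subset_right).trans hk
  calc ∑ v ∈ Ω \ prune Ω S, x v ≤ ∑ z ∈ (S ∩ Ω).biUnion (descendants n), x z :=
        sum_le_sum_of_subset_of_nonneg
          (hΩ.sdiff_prune_subset fun j hj => one_le_of_mem_Ico_two_pow (hS hj))
          fun z _ _ => hx z
    _ = ∑ j ∈ S ∩ Ω, subtreeWeight n x j := (sum_subtreeWeight_eq_sum_biUnion x hSΩ).symm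
    _ ≤ ∑ _j ∈ S ∩ Ω, u := sum_le_sum fun j hj => hSu j (mem_inter.1 hj).1
    _ = (S ∩ Ω).card * u := by rw [sum_const, nsmul_eq_mul]
    _ ≤ k * u := mul_le_mul_of_nonneg_right hcard hu

end TailBounds

lemma le_mul_ceil_sub {ε c : ℝ} (hε : 0 < ε) {k : ℕ} (hk : (k : ℝ) ≤ c) :
    (k : ℝ) ≤ ε * (⌈(1 + ε) * c / ε⌉₊ - k) := by
  have : (1 + ε) * c ≤ ε * ⌈(1 + ε) * c / ε⌉₊ := by
    rw [← div_le_iff₀' hε]; exact Nat.le_ceil _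
  nlinarith

theorem stmt16_general (D n : ℕ) (hD : 1 ≤ D) (hn : n = 2 ^ D - 1)
    (x : ℕ → ℝ) (hx : ∀ v, 0 ≤ x v)
    (δ ε : ℝ) (hε0 : 0 < ε)
    (k : ℕ) (hk1 : 1 ≤ k) (hk2 : (k : ℝ) ≤ (n : ℝ) ^ ((1 : ℝ) - δ))
    (η : ℕ)
    (R : Finset ℕ) (hR : R = Finset.Ico (2 ^ (D - η)) (2 ^ (D - η + 1)))
    (m : ℕ)
    (hm : m = ⌈(1 + ε) * (n : ℝ) ^ ((1 : ℝ) - δ) / ε⌉₊)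
    (u : ℝ) (humem : ∃ j ∈ R, subtreeWeight n x j = u)
    (hu2 : m ≤ (R.filter (fun j => u ≤ subtreeWeight n x j)).card)
    (Del : Finset ℕ) (hDel : Del = R.filter (fun j => subtreeWeight n x j < u)) :
    ∃ Ω : Finset ℕ, isRootedSubtree n Ω ∧ Ω.card ≤ k ∧
      (∀ v ∈ Ω, ∀ j ∈ Del, ∀ i : ℕ, v / 2 ^ i ≠ j) ∧
      ∀ Ω' : Finset ℕ, isRootedSubtree n Ω' → Ω'.card ≤ k →
        tailValue n x Ω ≤ (1 + ε) * tailValue n x Ω' := by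
  subst hR hm
  obtain ⟨j₀, hj₀, hj₀u⟩ := humem
  have hn1 : 1 ≤ n := by have := Nat.le_self_pow (n := D) (by omega) 2; omega
  have hu : 0 ≤ u := hj₀u ▸ subtreeWeight_nonneg n hx j₀
  have hDelR : Del ⊆ Ico (2 ^ (D - η)) (2 ^ (D - η + 1)) := hDel ▸ filter_subset _ _
  have hDelu : ∀ j ∈ Del, subtreeWeight n x j < u := fun j hj => by
    rw [hDel] at hj; exact (mem_filter.1 hj).2
  have hDel2 : ∀ j ∈ Del, 2 ≤ j := fun j hj =>
    two_le_of_mem_Ico_of_lt (hDelR hj) hj₀ (hj₀u.symm ▸ hDelu j hj)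
  obtain ⟨Ω₀, hΩ₀, hΩ₀k, hmin⟩ := exists_isRootedSubtree_tailValue_le hn1 x hk1
  have htail := sub_mul_le_tailValue hx hΩ₀ hΩ₀k (filter_subset _ _) hu2 hu
    fun j hj => (mem_filter.1 hj).2
  have hpruned := sum_sdiff_prune_le hx hΩ₀ hΩ₀k hDelR hu fun j hj => (hDelu j hj).le
  have hku : (k : ℝ) * u ≤ ε * tailValue n x Ω₀ := by
    have := mul_le_mul_of_nonneg_right (le_mul_ceil_sub hε0 hk2) hu
    nlinarith
  refine ⟨prune Ω₀ Del, isRootedSubtree_prune hΩ₀ hDel2, (card_filter_le _ _).trans hΩ₀k,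
    fun v hv => (mem_filter.1 hv).2, fun Ω' hΩ' hΩ'k => ?_⟩
  calc tailValue n x (prune Ω₀ Del)
      = tailValue n x Ω₀ + ∑ v ∈ Ω₀ \ prune Ω₀ Del, x v :=
        tailValue_eq_add_sum_sdiff (filter_subset _ _) hΩ₀.1
    _ ≤ (1 + ε) * tailValue n x Ω₀ := by linarith
    _ ≤ (1 + ε) * tailValue n x Ω' := by gcongr; exact hmin Ω' hΩ' hΩ'k

/-- In the perfect binary tree with `n = 2^D - 1` nodes (`D ≥ 1`) with
nonnegative weights, let `δ ∈ (0,1]`, `ε ∈ (0,1)`, and `k ≥ 1` with `k ≤ n^(1-δ)`.  Fix a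
level `1 ≤ η ≤ D`; the roots of the (pairwise disjoint) largest subtrees rooted at level `η`
are the nodes `R = [2^(D-η), 2^(D-η+1))`, with subtree weights `u_j = subtreeWeight n x j`.
Let `m = ⌈(1+ε)·n^(1-δ)/ε⌉ ≤ M = |R|`, let `u` be the `m`-th largest subtree weight (i.e. `u`
is one of the subtree weights, fewer than `m` of them exceed `u`, and at least `m` of them are
`≥ u`), and call the subtree rooted at `j ∈ R` deleted if `u_j < u`.  Then the minimum tail
value over `Ω ∈ 𝕋_k` avoiding all deleted subtrees is at most `(1+ε)` times the minimum tail
value over all of `𝕋_k` (stated as: some such `Ω` has tail value at most `(1+ε)` times the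
tail value of every `Ω' ∈ 𝕋_k`). -/
theorem stmt16 (D n : ℕ) (hD : 1 ≤ D) (hn : n = 2 ^ D - 1)
    (x : ℕ → ℝ) (hx : ∀ v, 0 ≤ x v)
    (δ ε : ℝ) (hδ0 : 0 < δ) (hδ1 : δ ≤ 1) (hε0 : 0 < ε) (hε1 : ε < 1)
    (k : ℕ) (hk1 : 1 ≤ k) (hk2 : (k : ℝ) ≤ (n : ℝ) ^ ((1 : ℝ) - δ))
    (η : ℕ) (hη1 : 1 ≤ η) (hη2 : η ≤ D)
    (R : Finset ℕ) (hR : R = Finset.Ico (2 ^ (D - η)) (2 ^ (D - η + 1)))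
    (M m : ℕ) (hM : M = R.card)
    (hm : m = ⌈(1 + ε) * (n : ℝ) ^ ((1 : ℝ) - δ) / ε⌉₊) (hmM : m ≤ M)
    (u : ℝ) (humem : ∃ j ∈ R, subtreeWeight n x j = u)
    (hu1 : (R.filter (fun j => u < subtreeWeight n x j)).card < m)
    (hu2 : m ≤ (R.filter (fun j => u ≤ subtreeWeight n x j)).card)
    (Del : Finset ℕ) (hDel : Del = R.filter (fun j => subtreeWeight n x j < u)) :
    ∃ Ω : Finset ℕ, isRootedSubtree n Ω ∧ Ω.card ≤ k ∧
      (∀ v ∈ Ω, ∀ j ∈ Del, ∀ i : ℕ, v / 2 ^ i ≠ j) ∧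
      ∀ Ω' : Finset ℕ, isRootedSubtree n Ω' → Ω'.card ≤ k →
        tailValue n x Ω ≤ (1 + ε) * tailValue n x Ω' :=
  stmt16_general D n hD hn x hx δ ε hε0 k hk1 hk2 η R hR m hm u humem hu2 Del hDel
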